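/- arXiv:2205.01653 — 2 statements merged into one kernel-verified Lean document; each statement's English description precedes it below -/
import Mathlib

section
/- Let R = ℤ[A,A⁻¹] be the ring of Laurent polynomials over ℤ, let Q = R[t]/S where S is the R-submodule of the polynomial ring R[t] generated by the elements r_n for n ≥ 2 (defined in the context), and let M = R ⊕ R ⊕ Q as an R-module. Then M does not decompose as a direct sum of a free R-module and a torsion R-module; that is, there is no R-module isomorphism M ≅ F ⊕ T with F a free R-module and T an R-module all of whose elements are annihilated by some nonzero element of R. -/
/-!
Counterexample to Marché's conjecture: the Kauffman bracket skein module of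
ℝP³ # ℝP³ over R = ℤ[A,A⁻¹], namely M = R ⊕ R ⊕ (R[t]/S), does not decompose
as a direct sum of a free R-module and a torsion R-module.
-/

open LaurentPolynomial Polynomial

noncomputable section

/-- The ring of Laurent polynomials `ℤ[A, A⁻¹]`; here `A = T 1`. -/
abbrev R : Type := LaurentPolynomial ℤ

/-- Chebyshev polynomials of the second kind: `S₀ = 1`, `S₁ = t`,
`S_{n+1} = t·S_n − S_{n−1}`, viewed in `R[t]`. -/
def cheb : ℕ → Polynomial R
  | 0 => 1
  | 1 => X
  | n + 2 => X * cheb (n + 1) - cheb n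

/-- The relation `r_n ∈ R[t]` for `n ≥ 2`:
for even `n`, `(A^{n+1} + A^{−(n+1)})(S_n(t) − 1) − 2(A + A^{−1})·∑_{k=1}^{n/2} A^{n+2−4k}`;
for odd `n`, `(A^{n+1} + A^{−(n+1)})(S_n(t) − t) − 2t·∑_{k=1}^{(n−1)/2} A^{n+1−4k}`. -/
def rel (n : ℕ) : Polynomial R :=
  if Even n then
    Polynomial.C (T ((n : ℤ) + 1) + T (-((n : ℤ) + 1))) * (cheb n - 1)
      - Polynomial.C ((2 : R) * (T 1 + T (-1)) *
          ∑ k ∈ Finset.range (n / 2), T ((n : ℤ) + 2 - 4 * ((k : ℤ) + 1)))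
  else
    Polynomial.C (T ((n : ℤ) + 1) + T (-((n : ℤ) + 1))) * (cheb n - X)
      - (2 : Polynomial R) * X *
          Polynomial.C (∑ k ∈ Finset.range ((n - 1) / 2), T ((n : ℤ) + 1 - 4 * ((k : ℤ) + 1)))

/-- The submodule `S ⊆ R[t]` generated by the `r_n`, `n ≥ 2`. -/
def SRel : Submodule R (Polynomial R) :=
  Submodule.span R {p : Polynomial R | ∃ n : ℕ, 2 ≤ n ∧ p = rel n}

/-- The quotient module `Q = R[t]/S`. -/
abbrev Qmod : Type := Polynomial R ⧸ SRel

/-!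
In a module `F ⊕ T` with `F` free and `T` torsion, an element that is not torsion has a nonzero
coordinate in `F`, i.e. is detected by a linear functional. The class of `1` in `Q` is not torsion:
the `r_n` have pairwise distinct positive degrees, so no nonzero constant lies in their span.
On the other hand, a functional `ψ` on `R[t]` vanishing on `S` satisfies, by `r_n` for even `n`,
`(A^{n+1} + A^{-(n+1)}) ∣ 2 (A + A⁻¹) (∑ A^{n+2-4k}) · ψ 1`. At a primitive `4(n+1)`-th root of
unity the left side vanishes while the first factor on the right does not, and neither does `ψ 1`
once `φ(4(n+1))` exceeds its degree (take `n + 1` a large prime). Hence `ψ 1 = 0`.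
-/

theorem exists_linearMap_apply_ne_zero_of_equiv_free_prod_torsion {k M F N : Type*} [Semiring k]
    [AddCommMonoid M] [Module k M] [AddCommMonoid F] [Module k F] [Module.Free k F]
    [AddCommMonoid N] [Module k N] (htor : ∀ x : N, ∃ r : k, r ≠ 0 ∧ r • x = 0)
    (e : M ≃ₗ[k] F × N) {m : M} (hm : ∀ r : k, r • m = 0 → r = 0) :
    ∃ φ : M →ₗ[k] k, φ m ≠ 0 := by
  let b := Module.Free.chooseBasis k F
  by_cases hfree : (e m).1 = 0
  · obtain ⟨r, hr0, hr⟩ := htor (e m).2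
    refine absurd (hm r (e.injective ?_)) hr0
    rw [map_smul, map_zero]
    ext
    · simp [hfree]
    · simp [hr]
  · obtain ⟨i, hi⟩ : ∃ i, b.repr (e m).1 i ≠ 0 := by
      by_contra! h
      exact hfree (b.repr.injective (Finsupp.ext h |>.trans (map_zero _).symm))
    exact ⟨b.coord i ∘ₗ LinearMap.fst k F N ∘ₗ e.toLinearMap, hi⟩

namespace Polynomial

theorem eq_zero_of_C_mem_span_range {k ι : Type*} [Semiring k] [NoZeroDivisors k] {v : ι → k[X]}
    (hdeg : Function.Injective fun i => (v i).natDegree) (hpos : ∀ i, 0 < (v i).natDegree)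
    {r : k} (hr : C r ∈ Submodule.span k (Set.range v)) : r = 0 := by
  classical
  obtain ⟨c, hc⟩ := Finsupp.mem_span_range_iff_exists_finsupp.1 hr
  suffices c = 0 by simpa [this] using hc.symm
  by_contra hc0
  obtain ⟨i, hi, hmax⟩ := c.support.exists_max_image (fun i => (v i).natDegree)
    (Finsupp.support_nonempty_iff.2 hc0)
  have hcoeff := congrArg (coeff · (v i).natDegree) hc
  simp only [Finsupp.sum, finsetSum_coeff, coeff_smul, smul_eq_mul, coeff_C,
    if_neg (hpos i).ne'] at hcoeff
  rw [Finset.sum_eq_single i] at hcoeff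
  · exact mul_ne_zero (Finsupp.mem_support_iff.1 hi)
      (leadingCoeff_ne_zero.2 (ne_zero_of_natDegree_gt (hpos i))) hcoeff
  · intro j hj hji
    rw [coeff_eq_zero_of_natDegree_lt ((hmax j hj).lt_of_ne (hdeg.ne hji)), mul_zero]
  · exact fun h => absurd hi h

theorem Chebyshev.degree_S_natCast (k : Type*) [CommRing k] [Nontrivial k] :
    ∀ n : ℕ, (S k n).degree = n
  | 0 => by simp
  | 1 => by simp
  | n + 2 => by
    have h := S_add_two k n
    push_cast at h ⊢
    rw [h, degree_sub_eq_left_of_degree_lt] <;>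
      rw [mul_comm, degree_mul_X, ← Nat.cast_one, ← Nat.cast_add, degree_S_natCast k (n + 1)]
    · norm_cast
    · rw [degree_S_natCast k n]; norm_cast; omega

end Polynomial

open Polynomial in
theorem IsPrimitiveRoot.aeval_ne_zero_of_natDegree_lt_totient {K : Type*} [CommRing K]
    [IsDomain K] [CharZero K] {μ : K} {N : ℕ} (hμ : IsPrimitiveRoot μ N) {P : ℤ[X]} (hP : P ≠ 0)
    (hdeg : P.natDegree < N.totient) : aeval μ P ≠ 0 := by
  intro h0
  have hN : 0 < N := Nat.pos_of_ne_zero (by rintro rfl; simp at hdeg)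
  have := natDegree_le_of_dvd (minpoly.isIntegrallyClosed_dvd (hμ.isIntegral hN) h0) hP
  have := hμ.totient_le_degree_minpoly
  omega

theorem LaurentPolynomial.exists_eval₂_ne_zero_of_isPrimitiveRoot (K : Type*) [Field K]
    [CharZero K] {u : ℤ[T;T⁻¹]} (hu : u ≠ 0) :
    ∃ B : ℕ, ∀ (N : ℕ) (ζ : Kˣ),
      IsPrimitiveRoot (ζ : K) N → B < N.totient → eval₂ (Int.castRingHom K) ζ u ≠ 0 := by
  obtain ⟨w, P, hP⟩ := exists_T_pow u
  have hP0 : P ≠ 0 := by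
    rintro rfl
    exact hu ((isUnit_T (w : ℤ)).mul_left_eq_zero.1 (by simpa using hP.symm))
  refine ⟨P.natDegree, fun N ζ hζ hB h0 => hζ.aeval_ne_zero_of_natDegree_lt_totient hP0 hB ?_⟩
  have := congrArg (eval₂ (Int.castRingHom _) ζ) hP
  rwa [eval₂_toLaurent, map_mul, h0, zero_mul] at this

def relLead (n : ℕ) : R := T ((n : ℤ) + 1) + T (-((n : ℤ) + 1))

def relConst (n : ℕ) : R :=
  (2 : R) * (T 1 + T (-1)) * ∑ k ∈ Finset.range (n / 2), T ((n : ℤ) + 2 - 4 * ((k : ℤ) + 1))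

theorem cheb_eq_S : ∀ n : ℕ, cheb n = Chebyshev.S R n
  | 0 => by simp [cheb]
  | 1 => by simp [cheb]
  | n + 2 => by
    rw [cheb, cheb_eq_S (n + 1), cheb_eq_S n]
    push_cast
    rw [Chebyshev.S_add_two]

theorem relLead_ne_zero (n : ℕ) : relLead n ≠ 0 := by
  intro h
  have := congrArg (LaurentPolynomial.eval₂ (RingHom.id ℤ) 1) h
  simp [relLead] at this

theorem rel_of_even {n : ℕ} (hn : Even n) :
    rel n = Polynomial.C (relLead n) * (cheb n - 1) - Polynomial.C (relConst n) := by
  rw [rel, if_pos hn, relLead, relConst]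

theorem degree_rel_sub_le (n : ℕ) : (rel n - Polynomial.C (relLead n) * cheb n).degree ≤ 1 := by
  have h (a b q : R[X]) : a * (cheb n - b) - q - a * cheb n = -(a * b) - q := by ring
  by_cases hn : Even n
  · rw [rel, if_pos hn, relLead, h]
    compute_degree!
  · rw [rel, if_neg hn, relLead, h]
    compute_degree!

theorem degree_rel {n : ℕ} (hn : 2 ≤ n) : (rel n).degree = n := by
  have hlead : (Polynomial.C (relLead n) * cheb n).degree = n := by
    rw [degree_C_mul (relLead_ne_zero n), cheb_eq_S, Chebyshev.degree_S_natCast]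
  rw [← sub_add_cancel (rel n) (Polynomial.C (relLead n) * cheb n), add_comm,
    degree_add_eq_left_of_degree_lt] <;> rw [hlead]
  exact (degree_rel_sub_le n).trans_lt (by exact_mod_cast hn)

theorem SRel_eq_span_range : SRel = Submodule.span R (Set.range fun n => rel (n + 2)) := by
  rw [SRel]
  congr 1
  ext p
  constructor
  · rintro ⟨n, hn, rfl⟩
    exact ⟨n - 2, by simp only [Nat.sub_add_cancel hn]⟩
  · rintro ⟨n, rfl⟩
    exact ⟨n + 2, by omega, rfl⟩

theorem eq_zero_of_C_mem_SRel {r : R} (hr : Polynomial.C r ∈ SRel) : r = 0 := by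
  have hdeg (n : ℕ) : (rel (n + 2)).natDegree = n + 2 :=
    natDegree_eq_of_degree_eq_some (degree_rel (by omega))
  rw [SRel_eq_span_range] at hr
  refine eq_zero_of_C_mem_span_range (fun m n h => ?_) (fun n => ?_) hr
  · simpa [hdeg] using h
  · rw [hdeg]; omega

theorem relLead_dvd_relConst_mul (ψ : R[X] →ₗ[R] R) (hψ : SRel ≤ LinearMap.ker ψ) {n : ℕ}
    (hn2 : 2 ≤ n) (hn : Even n) : relLead n ∣ relConst n * ψ 1 := by
  have hrel : ψ (rel n) = 0 := hψ (Submodule.subset_span ⟨n, hn2, rfl⟩)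
  rw [rel_of_even hn, ← mul_one (Polynomial.C (relConst n)), ← Polynomial.smul_eq_C_mul,
    ← Polynomial.smul_eq_C_mul, map_sub, map_smul, map_smul, smul_eq_mul, smul_eq_mul,
    sub_eq_zero] at hrel
  exact ⟨ψ (cheb n - 1), hrel.symm⟩

theorem T_sub_T_neg_mul_relConst {n : ℕ} (hn : Even n) :
    (T 1 - T (-1)) * relConst n = 2 * (T n - T (-n) : R) := by
  obtain ⟨m, rfl⟩ := hn
  have hT (a : ℤ) : (T 1 - T (-1)) * (T 1 + T (-1)) * T a = (T (a + 2) - T (a - 2) : R) := by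
    rw [T_add, T_sub, show (2 : ℤ) = 1 + 1 from rfl, neg_add, T_add, T_add]
    ring
  have hterm (k : ℕ) :
      (T 1 - T (-1)) * (2 * (T 1 + T (-1)) * T (((m + m : ℕ) : ℤ) + 2 - 4 * (k + 1)))
        = 2 * (T (2 * m - 4 * k) - T (2 * m - 4 * (k + 1 : ℕ)) : R) := by
    calc
      _ = 2 * ((T 1 - T (-1)) * (T 1 + T (-1)) * T (((m + m : ℕ) : ℤ) + 2 - 4 * (k + 1))) := by
        ring
      _ = _ := by rw [hT]; congr 3 <;> push_cast <;> ring
  rw [relConst, show (m + m) / 2 = m by omega, Finset.mul_sum, Finset.mul_sum,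
    Finset.sum_congr rfl fun k _ => hterm k,
    ← Finset.mul_sum, Finset.sum_range_sub' (fun k : ℕ => (T (2 * m - 4 * k) : R))]
  congr 3 <;> push_cast <;> ring

section Evaluation

variable {K : Type*} [Field K] {n : ℕ} {ζ : Kˣ}

theorem eval₂_relLead_eq_zero (hζ : IsPrimitiveRoot (ζ : K) (4 * (n + 1))) :
    LaurentPolynomial.eval₂ (Int.castRingHom K) ζ (relLead n) = 0 := by
  have hneg : ((ζ : K) ^ (n + 1)) ^ 2 = -1 := by
    have h2 := hζ.pow_of_dvd (p := 2 * (n + 1)) (by omega) ⟨2, by ring⟩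
    rw [show 4 * (n + 1) / (2 * (n + 1)) = 2 from Nat.div_eq_of_eq_mul_left (by omega) (by ring)]
      at h2
    rw [← pow_mul, mul_comm]
    exact h2.eq_neg_one_of_two_right
  have hne : (ζ : K) ^ (n + 1) ≠ 0 := pow_ne_zero _ ζ.ne_zero
  simp only [relLead, map_add, LaurentPolynomial.eval₂_T, Units.val_zpow_eq_zpow_val]
  rw [show ((n : ℤ) + 1) = ((n + 1 : ℕ) : ℤ) by push_cast; ring, zpow_neg, zpow_natCast]
  field_simp
  linear_combination hneg

theorem eval₂_relConst_ne_zero [CharZero K] (hn0 : n ≠ 0) (hn : Even n)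
    (hζ : IsPrimitiveRoot (ζ : K) (4 * (n + 1))) :
    LaurentPolynomial.eval₂ (Int.castRingHom K) ζ (relConst n) ≠ 0 := by
  intro h0
  have h := congrArg (LaurentPolynomial.eval₂ (Int.castRingHom K) ζ) (T_sub_T_neg_mul_relConst hn)
  simp only [map_mul, h0, mul_zero, map_sub, map_ofNat, LaurentPolynomial.eval₂_T,
    Units.val_zpow_eq_zpow_val, zpow_neg, zpow_natCast, Units.val_inv_eq_inv_val,
    Units.val_pow_eq_pow_val] at h
  have hne : (ζ : K) ^ n ≠ 0 := pow_ne_zero _ ζ.ne_zero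
  have hpow : (ζ : K) ^ (2 * n) = 1 := by
    field_simp at h
    linear_combination (-1 / 2 : K) * h
  have := Nat.le_of_dvd (by omega) ((hζ.pow_eq_one_iff_dvd _).1 hpow)
  omega

end Evaluation

theorem eq_zero_of_forall_relLead_dvd {u : R}
    (h : ∀ n, 2 ≤ n → Even n → relLead n ∣ relConst n * u) : u = 0 := by
  by_contra hu
  obtain ⟨B, hB⟩ := LaurentPolynomial.exists_eval₂_ne_zero_of_isPrimitiveRoot ℂ hu
  obtain ⟨p, hBp, hp⟩ := Nat.exists_infinite_primes (B + 3)
  obtain ⟨n, rfl⟩ : ∃ n, p = n + 1 := ⟨p - 1, by omega⟩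
  have hn : Even n := by simpa using hp.even_sub_one (by omega)
  have hζ := Complex.isPrimitiveRoot_exp (4 * (n + 1)) (by omega)
  let ζ : ℂˣ := (hζ.isUnit (by omega)).unit
  have htot : B < (4 * (n + 1)).totient := by
    have := Nat.le_of_dvd (Nat.totient_pos.2 (by omega))
      (Nat.totient_dvd_of_dvd (dvd_mul_left (n + 1) 4))
    rw [Nat.totient_prime hp] at this
    omega
  obtain ⟨q, hq⟩ := h n (by omega) hn
  have := congrArg (LaurentPolynomial.eval₂ (Int.castRingHom ℂ) ζ) hq
  rw [map_mul, map_mul, eval₂_relLead_eq_zero hζ, zero_mul] at this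
  exact mul_ne_zero (eval₂_relConst_ne_zero (by omega) hn hζ) (hB _ ζ hζ htot) this

theorem apply_one_eq_zero_of_SRel_le_ker (ψ : R[X] →ₗ[R] R) (hψ : SRel ≤ LinearMap.ker ψ) :
    ψ 1 = 0 :=
  eq_zero_of_forall_relLead_dvd fun _ hn2 hn => relLead_dvd_relConst_mul ψ hψ hn2 hn

theorem eq_zero_of_smul_mk_one_eq_zero {r : R} (h : r • (Submodule.Quotient.mk 1 : Qmod) = 0) :
    r = 0 := by
  rw [← Submodule.Quotient.mk_smul, Submodule.Quotient.mk_eq_zero, Polynomial.smul_eq_C_mul,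
    mul_one] at h
  exact eq_zero_of_C_mem_SRel h

/-- `M = R ⊕ R ⊕ Q` (the KBSM of `ℝP³ # ℝP³`) admits no decomposition `M ≅ F ⊕ T`
with `F` free and `T` torsion over `R = ℤ[A,A⁻¹]`. -/
theorem no_free_torsion_decomposition :
    ¬ ∃ (F Tor : Type) (_ : AddCommGroup F) (_ : Module R F)
        (_ : AddCommGroup Tor) (_ : Module R Tor),
      Module.Free R F ∧
      (∀ x : Tor, ∃ r : R, r ≠ 0 ∧ r • x = 0) ∧
      Nonempty ((R × R × Qmod) ≃ₗ[R] F × Tor) := by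
  rintro ⟨F, Tor, _, _, _, _, _, htor, ⟨e⟩⟩
  let ι : Qmod →ₗ[R] R × R × Qmod := LinearMap.inr R R _ ∘ₗ LinearMap.inr R R Qmod
  have hm (r : R) (hr : r • ι (SRel.mkQ 1) = 0) : r = 0 :=
    eq_zero_of_smul_mk_one_eq_zero (by simpa [ι] using congrArg (·.2.2) hr)
  obtain ⟨φ, hφ⟩ := exists_linearMap_apply_ne_zero_of_equiv_free_prod_torsion htor e hm
  exact hφ (apply_one_eq_zero_of_SRel_le_ker ((φ ∘ₗ ι) ∘ₗ SRel.mkQ)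
    ((Submodule.ker_mkQ SRel).ge.trans (LinearMap.ker_le_ker_comp _ _)))

end
end

section
/- Let R = ℤ[A,A⁻¹] be the ring of Laurent polynomials over ℤ and let Q = R[t]/S where S is the R-submodule of R[t] generated by the elements r_n for n ≥ 2 (defined in the context). Then Q contains nonzero torsion: there exist a nonzero element x ∈ Q and a nonzero element r ∈ R such that r·x = 0. -/
/-!
The quotient module Q = R[t]/S (with R = ℤ[A,A⁻¹] and S generated by the
skein relations r_n, n ≥ 2, of the KBSM of ℝP³ # ℝP³) contains nonzero torsion.
-/

open LaurentPolynomial Polynomial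

noncomputable section

/-!
Specialize `A ↦ i`, `t ↦ 2`. Since `S_n(2) = n + 1`, every `r_n` is killed: for even `n` both
`i^{n+1} + i^{-(n+1)}` and `i + i⁻¹` vanish, and for odd `n` the two terms are both
`2 (n - 1) i^{n+1}`. But `A + A⁻¹` divides `r₂` coefficientwise, and the quotient
`x = (A² − 1 + A⁻²) t² − 2 (A² + A⁻²)` specializes to `-8`. So `x ∉ S` while
`(A + A⁻¹) x = r₂ ∈ S`.
-/

open Complex

lemma I_zpow_neg_of_odd {k : ℤ} (hk : Odd k) : I ^ (-k) = -I ^ k := by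
  rw [zpow_neg, ← inv_zpow, inv_I, hk.neg_zpow]

lemma I_zpow_sub_four_mul (k j : ℤ) : I ^ (k - 4 * j) = I ^ k := by
  rw [zpow_sub₀ I_ne_zero, zpow_mul, zpow_ofNat, I_pow_four, one_zpow, div_one]

lemma I_zpow_neg_of_even {k : ℤ} (hk : Even k) : I ^ (-k) = I ^ k := by
  obtain ⟨j, rfl⟩ := hk
  rw [← I_zpow_sub_four_mul (j + j) j]
  ring_nf

def evalAtI : R →+* ℂ :=
  LaurentPolynomial.eval₂ (Int.castRingHom ℂ) (Units.mk0 I I_ne_zero)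

lemma evalAtI_T (k : ℤ) : evalAtI (T k) = I ^ k := by
  simp [evalAtI, Units.val_zpow_eq_zpow_val]

def skeinEval : Polynomial R →+* ℂ := eval₂RingHom evalAtI 2

lemma skeinEval_C (a : R) : skeinEval (Polynomial.C a) = evalAtI a := Polynomial.eval₂_C _ _

lemma skeinEval_X : skeinEval X = 2 := eval₂_X _ _

lemma eval₂_cheb_two {S : Type*} [CommRing S] (f : R →+* S) :
    ∀ n : ℕ, (cheb n).eval₂ f 2 = n + 1
  | 0 => by simp [cheb]
  | 1 => by rw [cheb, eval₂_X]; norm_num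
  | n + 2 => by
    rw [cheb, eval₂_sub, eval₂_mul, eval₂_X, eval₂_cheb_two f (n + 1), eval₂_cheb_two f n]
    push_cast
    ring

lemma skeinEval_cheb (n : ℕ) : skeinEval (cheb n) = n + 1 := eval₂_cheb_two evalAtI n

lemma skeinEval_rel (n : ℕ) : skeinEval (rel n) = 0 := by
  rcases Nat.even_or_odd n with hn | hn
  · have hn1 : Odd ((n : ℤ) + 1) := by exact_mod_cast hn.add_one
    rw [rel, if_pos hn]
    simp only [map_sub, map_mul, map_add, map_ofNat, skeinEval_C, evalAtI_T,
      I_zpow_neg_of_odd hn1, I_zpow_neg_of_odd odd_one]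
    ring
  · obtain ⟨m, rfl⟩ := hn
    have hn1 : Even (((2 * m + 1 : ℕ) : ℤ) + 1) := ⟨m + 1, by push_cast; ring⟩
    have hm : (2 * m + 1 - 1) / 2 = m := by omega
    rw [rel, if_neg (Nat.not_even_iff_odd.mpr (odd_two_mul_add_one m)), hm]
    simp only [map_sub, map_mul, map_add, map_ofNat, map_sum, skeinEval_C, skeinEval_X,
      skeinEval_cheb, evalAtI_T, I_zpow_sub_four_mul, I_zpow_neg_of_even hn1,
      Finset.sum_const, Finset.card_range, nsmul_eq_mul]
    push_cast
    ring

lemma SRel_le_ker_skeinEval : SRel ≤ (RingHom.ker skeinEval).restrictScalars R :=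
  Submodule.span_le.mpr <| by
    rintro _ ⟨n, -, rfl⟩
    exact skeinEval_rel n

def torsionPoly : Polynomial R :=
  Polynomial.C (T 2 - 1 + T (-2)) * X ^ 2 - Polynomial.C (2 * (T 2 + T (-2)))

lemma rel_two :
    rel 2 = Polynomial.C (T 3 + T (-3)) * (X ^ 2 - 2) - Polynomial.C (2 * (T 1 + T (-1))) := by
  rw [rel, if_pos even_two]
  simp only [cheb, Nat.reduceDiv, Finset.sum_range_one, Nat.cast_ofNat, Nat.cast_zero,
    Int.reduceAdd, zero_add, mul_one, sub_self, T_zero, map_mul, map_ofNat]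
  ring

lemma smul_torsionPoly : (T 1 + T (-1) : R) • torsionPoly = rel 2 := by
  have e1 : (T 1 + T (-1) : R) * (T 2 - 1 + T (-2)) = T 3 + T (-3) := by
    simp only [mul_add, add_mul, mul_sub, mul_one, ← T_add, Int.reduceAdd]
    ring
  have e2 : (T 1 + T (-1) : R) * (2 * (T 2 + T (-2))) =
      2 * (T 3 + T (-3)) + 2 * (T 1 + T (-1)) := by
    simp only [mul_add, add_mul, mul_left_comm _ (2 : R), ← T_add, Int.reduceAdd]
    ring
  rw [Polynomial.smul_eq_C_mul, torsionPoly, mul_sub, ← mul_assoc, ← Polynomial.C_mul,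
    ← Polynomial.C_mul, e1, e2, rel_two]
  simp only [map_add, map_mul, map_ofNat]
  ring

lemma skeinEval_torsionPoly : skeinEval torsionPoly = -8 := by
  have h2 : I ^ (2 : ℤ) = -1 := by rw [zpow_ofNat, I_sq]
  simp only [torsionPoly, map_sub, map_mul, map_add, map_pow, map_one, map_ofNat, skeinEval_C,
    skeinEval_X, evalAtI_T, I_zpow_neg_of_even even_two, h2]
  norm_num

lemma T_one_add_T_neg_one_ne_zero : (T 1 + T (-1) : R) ≠ 0 := by
  intro h
  have := congrArg (LaurentPolynomial.eval₂ (RingHom.id ℤ) 1) h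
  simp at this

lemma torsionPoly_notMem_SRel : torsionPoly ∉ SRel := fun h ↦ by
  have := SRel_le_ker_skeinEval h
  rw [Submodule.restrictScalars_mem, RingHom.mem_ker, skeinEval_torsionPoly] at this
  norm_num at this

/-- `Q = R[t]/S` contains nonzero torsion: there are `x ∈ Q`, `x ≠ 0`, and
`r ∈ R`, `r ≠ 0`, with `r • x = 0`. -/
theorem exists_torsion :
    ∃ (x : Qmod) (r : R), x ≠ 0 ∧ r ≠ 0 ∧ r • x = 0 := by
  refine ⟨Submodule.Quotient.mk torsionPoly, T 1 + T (-1), ?_, T_one_add_T_neg_one_ne_zero, ?_⟩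
  · rw [Ne, Submodule.Quotient.mk_eq_zero]
    exact torsionPoly_notMem_SRel
  · rw [← Submodule.Quotient.mk_smul, smul_torsionPoly, Submodule.Quotient.mk_eq_zero]
    exact Submodule.subset_span ⟨2, le_rfl, rfl⟩

end
end
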